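/- The map x ↦ r(tr(x)) induces a k̄-linear isomorphism 𝔪^{−d}/𝔪^{1−d} → k̄; in particular tr maps 𝔪^{−d} onto O_k and 𝔪^{1−d} onto 𝔪₀, and consequently c_π = tr(π^{−d}) is a unit of O_k. -/

import Mathlib

set_option synthInstance.maxHeartbeats 1000000
set_option maxHeartbeats 1000000

open scoped TensorProduct

noncomputable section

/-- A normalized additive discrete valuation turning `K` into a complete discrete
valuation field (the value at `0` is junk). -/
structure CDVF (K : Type) [Field K] where
  v : K → ℤ
  v_mul : ∀ {x y : K}, x ≠ 0 → y ≠ 0 → v (x * y) = v x + v y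
  v_add : ∀ {x y : K}, x ≠ 0 → y ≠ 0 → x + y ≠ 0 → min (v x) (v y) ≤ v (x + y)
  v_one : v 1 = 0
  exists_uniformizer : ∃ x : K, x ≠ 0 ∧ v x = 1
  complete : ∀ f : ℕ → K,
    (∀ N : ℤ, ∃ M : ℕ, ∀ i ≥ M, ∀ j ≥ M, f i = f j ∨ N ≤ v (f i - f j)) →
    ∃ x : K, ∀ N : ℤ, ∃ M : ℕ, ∀ i ≥ M, f i = x ∨ N ≤ v (f i - x)

namespace CDVF

variable {K : Type} [Field K] (S : CDVF K)

/-- The ring of integers of a complete discrete valuation field. -/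
def O : Subring K where
  carrier := {x : K | x = 0 ∨ 0 ≤ S.v x}
  zero_mem' := Or.inl rfl
  one_mem' := Or.inr S.v_one.ge
  mul_mem' := by
    rintro x y hx hy
    rcases eq_or_ne x 0 with rfl | hx0
    · exact Or.inl (zero_mul _)
    rcases eq_or_ne y 0 with rfl | hy0
    · exact Or.inl (mul_zero _)
    · refine Or.inr ?_
      rw [S.v_mul hx0 hy0]
      have h1 := hx.resolve_left hx0
      have h2 := hy.resolve_left hy0
      omega
  add_mem' := by
    rintro x y hx hy
    rcases eq_or_ne x 0 with rfl | hx0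
    · simpa using hy
    rcases eq_or_ne y 0 with rfl | hy0
    · simpa using hx
    rcases eq_or_ne (x + y) 0 with h | h
    · exact Or.inl h
    · refine Or.inr ?_
      have h3 := S.v_add hx0 hy0 h
      have h1 := hx.resolve_left hx0
      have h2 := hy.resolve_left hy0
      omega
  neg_mem' := by
    rintro x hx
    rcases eq_or_ne x 0 with rfl | hx0
    · simp
    · refine Or.inr ?_
      have hn : S.v (-x) = S.v x := by
        have h1 : (-1 : K) ≠ 0 := by simp
        have e : (-1 : K) * (-1) = 1 := by ring
        have h2 := S.v_mul (x := (-1 : K)) (y := (-1 : K)) h1 h1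
        rw [e, S.v_one] at h2
        have h3 := S.v_mul (x := (-1 : K)) (y := x) h1 hx0
        rw [neg_one_mul] at h3
        omega
      rw [hn]
      exact hx.resolve_left hx0

/-- The maximal ideal of the ring of integers. -/
def mIdeal : Ideal S.O where
  carrier := {x : S.O | (x : K) = 0 ∨ 1 ≤ S.v (x : K)}
  zero_mem' := Or.inl rfl
  add_mem' := by
    rintro x y hx hy
    rcases eq_or_ne ((x : K)) 0 with h1 | h1
    · have : ((x + y : S.O) : K) = (y : K) := by push_cast [h1]; ring
      rw [Set.mem_setOf_eq, this]; exact hy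
    rcases eq_or_ne ((y : K)) 0 with h2 | h2
    · have : ((x + y : S.O) : K) = (x : K) := by push_cast [h2]; ring
      rw [Set.mem_setOf_eq, this]; exact hx
    rcases eq_or_ne ((x : K) + (y : K)) 0 with h | h
    · exact Or.inl (by push_cast; exact h)
    · refine Or.inr ?_
      have h3 := S.v_add h1 h2 h
      have hx' := hx.resolve_left h1
      have hy' := hy.resolve_left h2
      have : ((x + y : S.O) : K) = (x : K) + (y : K) := by push_cast; ring
      rw [this]
      omega
  smul_mem' := by
    rintro c x hx
    rcases eq_or_ne ((c : K)) 0 with h1 | h1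
    · exact Or.inl (by push_cast [smul_eq_mul, h1]; ring)
    rcases eq_or_ne ((x : K)) 0 with h2 | h2
    · exact Or.inl (by push_cast [smul_eq_mul, h2]; ring)
    · refine Or.inr ?_
      have hc : (c : K) = 0 ∨ 0 ≤ S.v (c : K) := c.2
      have hc' := hc.resolve_left h1
      have hx' := hx.resolve_left h2
      have : ((c • x : S.O) : K) = (c : K) * (x : K) := by push_cast [smul_eq_mul]; ring
      rw [this, S.v_mul h1 h2]
      omega

/-- The residue field (as a quotient ring). -/
abbrev Residue : Type := S.O ⧸ S.mIdeal

open Classical in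
/-- Reduction map `O_K → k̄`, extended by (junk) zero outside of `O_K`. -/
def redK (x : K) : S.Residue :=
  if h : x ∈ S.O then Ideal.Quotient.mk S.mIdeal ⟨x, h⟩ else 0

/-- The ring `R = k̄[X]/(X^n - 1)`. -/
abbrev Rring (n : ℕ) : Type :=
  Polynomial S.Residue ⧸ Ideal.span {(Polynomial.X : Polynomial S.Residue) ^ n - 1}

instance instIsTwoSidedRring (n : ℕ) :
    (Ideal.span {(Polynomial.X : Polynomial S.Residue) ^ n - 1}).IsTwoSided :=
  @Ideal.instIsTwoSided_1 _ Polynomial.commRing _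

/-- The class of the variable `X` in `R`. -/
def mkX (n : ℕ) : S.Rring n :=
  Ideal.Quotient.mk _ Polynomial.X

instance instAlgebraResidueRring (n : ℕ) : Algebra S.Residue (S.Rring n) :=
  Ideal.Quotient.algebra _

instance instModuleResidueRring (n : ℕ) : Module S.Residue (S.Rring n) :=
  Algebra.toModule

end CDVF

/-- A totally ramified extension `K/k` of complete discrete valuation fields,
where `v` is the normalized valuation of `K`. -/
structure TotallyRamified (k K : Type) [Field k] [Field K] [Algebra k K]
    extends CDVF K where
  finiteDim : FiniteDimensional k K
  val_dvd : ∀ x : k, x ≠ 0 →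
    (Module.finrank k K : ℤ) ∣ toCDVF.v (algebraMap k K x)
  exists_base_uniformizer : ∃ x : k, x ≠ 0 ∧
    toCDVF.v (algebraMap k K x) = (Module.finrank k K : ℤ)
  residue_trivial : ∀ x : K, (x = 0 ∨ 0 ≤ toCDVF.v x) →
    ∃ y : k, x - algebraMap k K y = 0 ∨ 1 ≤ toCDVF.v (x - algebraMap k K y)

/-- A totally ramified extension together with its ramification depth `d`;
`d` is characterized by the property that the codifferent of `K/k`
(the trace-dual of `O_K`) equals `𝔪^(1-d-n)`, i.e. `d = v(different) - n + 1`. -/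
structure TotallyRamifiedD (k K : Type) [Field k] [Field K] [Algebra k K]
    extends TotallyRamified k K where
  depth : ℤ
  depth_spec : ∀ x : K,
    (∀ y : K, (y = 0 ∨ 0 ≤ toCDVF.v y) →
      (Algebra.trace k K (x * y) = 0 ∨
        0 ≤ toCDVF.v (algebraMap k K (Algebra.trace k K (x * y))))) ↔
    (x = 0 ∨ 1 - depth - (Module.finrank k K : ℤ) ≤ toCDVF.v x)

section GaloisModules

variable (k : Type) {K : Type} [Field k] [Field K] [Algebra k K]

/-- The action of the group algebra `K[G]` on `K`: `(Σ a_σ σ)(x) = Σ a_σ σ(x)`. -/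
def applyGA (f : MonoidAlgebra K (K ≃ₐ[k] K)) (x : K) : K :=
  f.coeff.sum fun σ a => a * σ x

/-- The filtration module `C_i ⊆ K[G]`. -/
def CfilGA (S : CDVF K) (i : ℤ) : Set (MonoidAlgebra K (K ≃ₐ[k] K)) :=
  {f | ∀ x : K, x ≠ 0 → applyGA k f x = 0 ∨ S.v x + i ≤ S.v (applyGA k f x)}

/-- `f ∈ K[G]` has all its coefficients in (the image of) `k₀`. -/
def coeffsIn (k₀ : Type) [CommRing k₀] [Algebra k₀ K]
    (f : MonoidAlgebra K (K ≃ₐ[k] K)) : Prop :=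
  ∀ σ : K ≃ₐ[k] K, ∃ c : k₀, f.coeff σ = algebraMap k₀ K c

/-- The `k₀`-submodule `k₀[G] ⊆ K[G]`. -/
def baseSub (k₀ : Type) [Field k₀] [Algebra k₀ K] :
    Submodule k₀ (MonoidAlgebra K (K ≃ₐ[k] K)) where
  carrier := {f | coeffsIn k k₀ f}
  zero_mem' := by intro σ; exact ⟨0, by simp⟩
  add_mem' := by
    intro f g hf hg σ
    obtain ⟨c, hc⟩ := hf σ
    obtain ⟨d, hd⟩ := hg σ
    refine ⟨c + d, ?_⟩
    rw [map_add, ← hc, ← hd]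
    exact Finsupp.add_apply f.coeff g.coeff σ
  smul_mem' := by
    intro a f hf σ
    obtain ⟨c, hc⟩ := hf σ
    refine ⟨a * c, ?_⟩
    rw [MonoidAlgebra.coeff_smul_apply, hc, map_mul, Algebra.smul_def]

/-- `d(f)`: the unique integer `i` with `f ∈ C_{i+d} ∖ C_{i+d+1}` (junk value if
no such integer exists). -/
def dOfGA (S : TotallyRamifiedD k K) (f : MonoidAlgebra K (K ≃ₐ[k] K)) : ℤ :=
  Classical.epsilon fun i : ℤ =>
    f ∈ CfilGA k S.toCDVF (i + S.depth) ∧ f ∉ CfilGA k S.toCDVF (i + S.depth + 1)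

/-- The map `p_i : C_i → R = k̄[X]/(X^n-1)`,
`p_i(f) = r(c_π)⁻¹ Σ_j r(f(π^{j-i})/π^j) X^j` (junk outside `C_i`). -/
def pGA (S : TotallyRamifiedD k K) (π : K) (i : ℤ)
    (f : MonoidAlgebra K (K ≃ₐ[k] K)) :
    S.toCDVF.Rring (Module.finrank k K) :=
  Ring.inverse
      (algebraMap S.toCDVF.Residue _
        (S.toCDVF.redK (algebraMap k K (Algebra.trace k K (π ^ (-S.depth))))))
    * ∑ j ∈ Finset.range (Module.finrank k K),
        algebraMap S.toCDVF.Residue _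
            (S.toCDVF.redK (applyGA k f (π ^ ((j : ℤ) - i)) / π ^ j))
          * (S.toCDVF.mkX (Module.finrank k K)) ^ j

/-- `ρ(f) = p_{d(f)+d}(f)`. -/
def rhoGA (S : TotallyRamifiedD k K) (π : K) (f : MonoidAlgebra K (K ≃ₐ[k] K)) :
    S.toCDVF.Rring (Module.finrank k K) :=
  pGA k S π (dOfGA k S f + S.depth) f

/-- `B_s = {f ∈ B : d(f) ≡ s mod e₀}`. -/
def BpartGA (S : TotallyRamifiedD k K) (e₀ : ℤ)
    (B : Set (MonoidAlgebra K (K ≃ₐ[k] K))) (s : ℤ) :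
    Set (MonoidAlgebra K (K ≃ₐ[k] K)) :=
  {f | f ∈ B ∧ Int.ModEq e₀ (dOfGA k S f) s}

/-- `B` is graded-independent (relative to the modulus `e₀`): for every `s`
the set `ρ(B_s) ⊆ R` is linearly independent over the residue field. -/
def GradedIndepGA (S : TotallyRamifiedD k K) (π : K) (e₀ : ℤ)
    (B : Set (MonoidAlgebra K (K ≃ₐ[k] K))) : Prop :=
  ∀ s : ℤ, LinearIndependent S.toCDVF.Residue
    (fun g : (rhoGA k S π '' BpartGA k S e₀ B s) =>
      (g : S.toCDVF.Rring (Module.finrank k K)))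

/-- The (lower) ramification jump of `σ ∈ G`: `h(σ) = v(σ(π) - π) - 1`. -/
def rjump (S : CDVF K) (π : K) (σ : K ≃ₐ[k] K) : ℤ :=
  S.v (σ π - π) - 1

/-- The ramification depth of a subextension `L/k` of `K/k`, where `e` is the
ramification index of `K/L`: `D` is the depth of `L/k` iff the trace-dual of
`O_L` equals `𝔪_L^(1-D-[L:k])`. -/
def IsSubDepth (S : CDVF K) (L : IntermediateField k K) (e D : ℤ) : Prop :=
  ∀ x : ↥L,
    (∀ y : ↥L, ((y : K) = 0 ∨ 0 ≤ S.v (y : K)) →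
      (Algebra.trace k ↥L (x * y) = 0 ∨
        0 ≤ S.v (algebraMap k K (Algebra.trace k ↥L (x * y))))) ↔
    ((x : K) = 0 ∨ e * (1 - D - (Module.finrank k ↥L : ℤ)) ≤ S.v (x : K))

end GaloisModules

section Phi

variable (k K : Type) [Field k] [Field K] [Algebra k K]

/-- The isomorphism `φ : K ⊗_k K → K[G]`, `x ⊗ y ↦ x Σ_σ σ(y) σ`. -/
def phiGA [FiniteDimensional k K] :
    K ⊗[k] K →ₗ[k] MonoidAlgebra K (K ≃ₐ[k] K) :=
  TensorProduct.lift
    { toFun := fun x =>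
        { toFun := fun y => ∑ σ : K ≃ₐ[k] K, MonoidAlgebra.single σ (x * σ y)
          map_add' := fun y z => by
            rw [← Finset.sum_add_distrib]
            refine Finset.sum_congr rfl fun σ _ => ?_
            rw [map_add, mul_add, MonoidAlgebra.single_add]
          map_smul' := fun a y => by
            rw [RingHom.id_apply, Finset.smul_sum]
            refine Finset.sum_congr rfl fun σ _ => ?_
            rw [map_smul, MonoidAlgebra.smul_single]
            congr 1
            rw [Algebra.smul_def, Algebra.smul_def]
            ring }
      map_add' := fun x x' => LinearMap.ext fun y => by
        show (∑ σ : K ≃ₐ[k] K, MonoidAlgebra.single σ ((x + x') * σ y)) =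
          (∑ σ : K ≃ₐ[k] K, MonoidAlgebra.single σ (x * σ y)) +
            ∑ σ : K ≃ₐ[k] K, MonoidAlgebra.single σ (x' * σ y)
        rw [← Finset.sum_add_distrib]
        refine Finset.sum_congr rfl fun σ _ => ?_
        rw [add_mul, MonoidAlgebra.single_add]
      map_smul' := fun a x => LinearMap.ext fun y => by
        show (∑ σ : K ≃ₐ[k] K, MonoidAlgebra.single σ ((a • x) * σ y)) =
          a • ∑ σ : K ≃ₐ[k] K, MonoidAlgebra.single σ (x * σ y)
        rw [Finset.smul_sum]
        refine Finset.sum_congr rfl fun σ _ => ?_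
        rw [MonoidAlgebra.smul_single]
        congr 1
        rw [Algebra.smul_def, Algebra.smul_def]
        ring }

/-- Coefficientwise (Hadamard) product on `K[G]`. -/
def hadamardGA (f g : MonoidAlgebra K (K ≃ₐ[k] K)) :
    MonoidAlgebra K (K ≃ₐ[k] K) :=
  MonoidAlgebra.ofCoeff (Finsupp.zipWith (· * ·) (mul_zero 0) f.coeff g.coeff)

/-- The filtration `X_i = Σ_j 𝔪^j ⊗_{O_k} 𝔪^{i-j} ⊆ K ⊗_k K`. -/
def Xfil (S : CDVF K) (i : ℤ) : AddSubgroup (K ⊗[k] K) :=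
  AddSubgroup.closure
    {z | ∃ (x y : K) (j : ℤ), (x = 0 ∨ j ≤ S.v x) ∧ (y = 0 ∨ i - j ≤ S.v y) ∧
      z = x ⊗ₜ[k] y}

/-- The subring `O_K ⊗_{O_k} O_K ⊆ K ⊗_k K` (more precisely, its image). -/
def OOsub (S : CDVF K) : Subring (K ⊗[k] K) :=
  Subring.closure
    {z | ∃ x y : K, (x = 0 ∨ 0 ≤ S.v x) ∧ (y = 0 ∨ 0 ≤ S.v y) ∧ z = x ⊗ₜ[k] y}

/-- The partial (pre)order on `ℤ²` induced by the componentwise order on the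
quotient `𝒳 = ℤ²/∼`, where `(a,b) ∼ (a-nc, b+nc)`. -/
def classLE (n : ℤ) (q q' : ℤ × ℤ) : Prop :=
  ∃ c : ℤ, q.1 ≤ q'.1 + n * c ∧ q.2 ≤ q'.2 - n * c

/-- `α ∈ K ⊗_k K` is diagonal: it can be written as `Σ ε_{ij} π^i ⊗ π^j` with
`ε_{ij}` units of `O_K ⊗_{O_k} O_K`, the classes of the pairs `(i,j)` pairwise
incomparable, and `i + j` constant. -/
def DiagonalT (S : CDVF K) (π : K) (n : ℤ) (α : K ⊗[k] K) : Prop :=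
  ∃ (T : Finset (ℤ × ℤ)) (ε : ℤ × ℤ → K ⊗[k] K) (c : ℤ),
    (∀ q ∈ T, ε q ∈ OOsub k K S ∧ ∃ β ∈ OOsub k K S, ε q * β = 1) ∧
    (∀ q ∈ T, ∀ q' ∈ T, q ≠ q' → ¬classLE n q q' ∧ ¬classLE n q' q) ∧
    (∀ q ∈ T, q.1 + q.2 = c) ∧
    α = ∑ q ∈ T, (ε q) * ((π ^ q.1) ⊗ₜ[k] (π ^ q.2))

/-- The defining properties of the canonical map `r_X : X_0/X_1 → k̄[X]/(X^n-1)`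
(viewed as a function on `X_0 ⊆ K ⊗_k K`): it is additive and multiplicative on
`X_0`, unital, kills `X_1`, sends `π ⊗ π⁻¹` to `X` and is `k̄`-linear. -/
def IsRX (S : CDVF K) (n : ℕ) (π : K) (ψ : K ⊗[k] K → S.Rring n) : Prop :=
  (∀ x y : K ⊗[k] K, x ∈ Xfil k K S 0 → y ∈ Xfil k K S 0 →
    ψ (x + y) = ψ x + ψ y) ∧
  (∀ x y : K ⊗[k] K, x ∈ Xfil k K S 0 → y ∈ Xfil k K S 0 →
    ψ (x * y) = ψ x * ψ y) ∧
  ψ 1 = 1 ∧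
  (∀ x ∈ Xfil k K S 1, ψ x = 0) ∧
  ψ (π ⊗ₜ[k] π⁻¹) = S.mkX n ∧
  (∀ c : k, (c = 0 ∨ 0 ≤ S.v (algebraMap k K c)) →
    ψ (algebraMap k K c ⊗ₜ[k] (1 : K)) =
      algebraMap S.Residue (S.Rring n) (S.redK (algebraMap k K c)))

end Phi

section TensorMapSec

variable (k' k K' K : Type) [Field k'] [Field k] [Field K'] [Field K]
  [Algebra k' k] [Algebra k' K'] [Algebra k K] [Algebra K' K] [Algebra k' K]
  [IsScalarTower k' k K] [IsScalarTower k' K' K]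

/-- The natural map `K' ⊗_{k'} K' → K ⊗_k K`, `x ⊗ y ↦ x ⊗ y`. -/
def tensorMap : K' ⊗[k'] K' →+ K ⊗[k] K :=
  TensorProduct.liftAddHom
    { toFun := fun x =>
        { toFun := fun y => algebraMap K' K x ⊗ₜ[k] algebraMap K' K y
          map_zero' := by simp
          map_add' := by intro y z; simp [map_add, TensorProduct.tmul_add] }
      map_zero' := by
        ext y; simp
      map_add' := by
        intro x z; ext y; simp [map_add, TensorProduct.add_tmul] }
    (by
      intro r m n
      have h : ∀ u : K', algebraMap K' K (r • u) =
          (algebraMap k' k r) • (algebraMap K' K u) := by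
        intro u
        rw [Algebra.smul_def, map_mul, Algebra.smul_def]
        congr 1
        rw [← IsScalarTower.algebraMap_apply k' K' K,
          IsScalarTower.algebraMap_apply k' k K]
      simp only [AddMonoidHom.coe_mk, ZeroHom.coe_mk]
      rw [h, h, TensorProduct.smul_tmul])

end TensorMapSec

section LiftGA

variable {k' K' k K : Type} [Field k'] [Field K'] [Field k] [Field K]
  [Algebra k' K'] [Algebra k K] [Algebra K' K]

/-- Transport of a group-algebra element along a lifting `ι` of Galois
automorphisms and the inclusion of coefficients. -/
def liftGA (ι : (K' ≃ₐ[k'] K') → (K ≃ₐ[k] K))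
    (f : MonoidAlgebra K' (K' ≃ₐ[k'] K')) : MonoidAlgebra K (K ≃ₐ[k] K) :=
  f.coeff.sum fun σ a => MonoidAlgebra.single (ι σ) (algebraMap K' K a)

end LiftGA

/-- The setting of an elementary abelian extension of degree `p²`:
`K = K₁K₂` with `K₁/k`, `K₂/k` of degree `p` with ramification jumps
`h₂ > h₁ > 0`; `σ₁` (resp. `σ₂`) is a nontrivial element of `G` acting
trivially on `K₂` (resp. `K₁`), and `π` is a uniformizer of `K`. -/
structure ZpSetting (p : ℕ) (k K : Type) [Field k] [Field K] [Algebra k K]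
    extends TotallyRamifiedD k K where
  π : K
  K₁ : IntermediateField k K
  K₂ : IntermediateField k K
  σ₁ : K ≃ₐ[k] K
  σ₂ : K ≃ₐ[k] K
  h₁ : ℤ
  h₂ : ℤ
  pp : p.Prime
  galois : IsGalois k K
  rank : Module.finrank k K = p ^ 2
  expP : ∀ σ : K ≃ₐ[k] K, σ ^ p = 1
  rank₁ : Module.finrank k ↥K₁ = p
  rank₂ : Module.finrank k ↥K₂ = p
  normal₁ : Normal k ↥K₁
  normal₂ : Normal k ↥K₂
  compositum : K₁ ⊔ K₂ = ⊤
  σ₁_ne : σ₁ ≠ 1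
  σ₂_ne : σ₂ ≠ 1
  σ₁_fix : ∀ x : K, x ∈ K₂ → σ₁ x = x
  σ₂_fix : ∀ x : K, x ∈ K₁ → σ₂ x = x
  h₁_pos : 0 < h₁
  h_lt : h₁ < h₂
  π_ne : π ≠ 0
  π_uni : toCDVF.v π = 1
  exists_uni₁ : ∃ x : K, x ∈ K₁ ∧ x ≠ 0 ∧ toCDVF.v x = (p : ℤ)
  exists_uni₂ : ∃ x : K, x ∈ K₂ ∧ x ≠ 0 ∧ toCDVF.v x = (p : ℤ)
  jump₁ : ∀ x : K, x ∈ K₁ → x ≠ 0 → toCDVF.v x = (p : ℤ) →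
    toCDVF.v (σ₁ x - x) = (p : ℤ) * (h₁ + 1)
  jump₂ : ∀ x : K, x ∈ K₂ → x ≠ 0 → toCDVF.v x = (p : ℤ) →
    toCDVF.v (σ₂ x - x) = (p : ℤ) * (h₂ + 1)

/-- The element `f_{ij} = (σ₁ - 1)^i (σ₂ - 1)^j ∈ k[G] ⊆ K[G]`. -/
def fijGA {p : ℕ} {k K : Type} [Field k] [Field K] [Algebra k K]
    (Z : ZpSetting p k K) (i j : ℕ) : MonoidAlgebra K (K ≃ₐ[k] K) :=
  (MonoidAlgebra.single Z.σ₁ (1 : K) - 1) ^ i *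
    (MonoidAlgebra.single Z.σ₂ (1 : K) - 1) ^ j

/-- The piecewise linear function `H(i,j)`. -/
def Hfun (p : ℕ) (h₁ h₂ d : ℤ) (i j : ℕ) : ℤ :=
  if (i : ℤ) + (j : ℤ) < (p : ℤ) - 1 then
    h₁ * i + ((p : ℤ) * h₂ - ((p : ℤ) - 1) * h₁) * j - d
  else ((p : ℤ) * i - ((p : ℤ) - 1) ^ 2) * h₁ + (p : ℤ) * h₂ * j

/-- The element `P(i,j) ∈ R = k̄[X]/(X^n - 1)`. -/
def Pel {K : Type} [Field K] (S : CDVF K) (n p : ℕ) (h₁ h₂ : ℤ) (i j : ℕ) :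
    S.Rring n :=
  if (i : ℤ) + (j : ℤ) < (p : ℤ) - 1 then
    ((S.mkX n) ^ h₁.toNat - 1) ^ (n - (i + j) - 1)
  else
    (∑ s ∈ Finset.range p,
        ((∏ l ∈ Finset.range i, ((s : ℤ) - ((l : ℤ) + 1) * h₁) : ℤ) : S.Rring n)
          * (S.mkX n) ^ (p * s)) *
    (∑ t ∈ Finset.range p,
        ((∏ l ∈ Finset.range j, ((t : ℤ) - ((l : ℤ) + 1) * h₂) : ℤ) : S.Rring n)
          * (S.mkX n) ^ (p * t))

end
section Helpers16

variable {K : Type} [Field K]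

lemma cdvf_mem_O_iff (S : CDVF K) {a : K} : a ∈ S.O ↔ (a = 0 ∨ 0 ≤ S.v a) :=
  Iff.rfl

lemma cdvf_v_inv (S : CDVF K) {x : K} (hx : x ≠ 0) : S.v x⁻¹ = -S.v x := by
  have h := S.v_mul hx (inv_ne_zero hx)
  rw [mul_inv_cancel₀ hx, S.v_one] at h
  omega

lemma cdvf_v_pow (S : CDVF K) {x : K} (hx : x ≠ 0) (m : ℕ) :
    S.v (x ^ m) = m * S.v x := by
  induction m with
  | zero => simpa using S.v_one
  | succ m ih =>
    rw [pow_succ, S.v_mul (pow_ne_zero _ hx) hx, ih]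
    push_cast; ring

lemma cdvf_v_zpow (S : CDVF K) {x : K} (hx : x ≠ 0) (m : ℤ) :
    S.v (x ^ m) = m * S.v x := by
  rcases m with m | m
  · rw [Int.ofNat_eq_coe, zpow_natCast, cdvf_v_pow S hx]
  · rw [zpow_negSucc, cdvf_v_inv S (pow_ne_zero _ hx), cdvf_v_pow S hx,
      Int.negSucc_eq]
    push_cast; ring

lemma cdvf_redK_mk (S : CDVF K) {a : K} (h : a ∈ S.O) :
    S.redK a = Ideal.Quotient.mk S.mIdeal ⟨a, h⟩ := dif_pos h

lemma cdvf_redK_add (S : CDVF K) {a b : K} (ha : a ∈ S.O) (hb : b ∈ S.O) :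
    S.redK (a + b) = S.redK a + S.redK b := by
  rw [cdvf_redK_mk S ha, cdvf_redK_mk S hb, cdvf_redK_mk S (add_mem ha hb),
    ← map_add]
  rfl

lemma cdvf_redK_mul (S : CDVF K) {a b : K} (ha : a ∈ S.O) (hb : b ∈ S.O) :
    S.redK (a * b) = S.redK a * S.redK b := by
  rw [cdvf_redK_mk S ha, cdvf_redK_mk S hb, cdvf_redK_mk S (mul_mem ha hb),
    ← map_mul]
  rfl

lemma cdvf_redK_zero_iff (S : CDVF K) {a : K} (h : a ∈ S.O) :
    S.redK a = 0 ↔ (a = 0 ∨ 1 ≤ S.v a) := by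
  rw [cdvf_redK_mk S h, Ideal.Quotient.eq_zero_iff_mem]
  rfl

lemma cdvf_redK_congr (S : CDVF K) {a b : K} (ha : a ∈ S.O) (hb : b ∈ S.O)
    (h : a - b = 0 ∨ 1 ≤ S.v (a - b)) : S.redK a = S.redK b := by
  have hm : a - b ∈ S.O := h.imp id (by omega)
  have h2 : S.redK (a - b + b) = S.redK (a - b) + S.redK b :=
    cdvf_redK_add S hm hb
  rw [sub_add_cancel] at h2
  rw [h2, (cdvf_redK_zero_iff S hm).mpr h, zero_add]

end Helpers16
/-- The map `x ↦ r(tr(x))` induces a `k̄`-linear isomorphism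
`𝔪^{-d}/𝔪^{1-d} → k̄`; in particular `tr` maps `𝔪^{-d}` onto `O_k` and
`𝔪^{1-d}` onto `𝔪₀`, and `c_π = tr(π^{-d})` is a unit of `O_k`. -/
theorem statement16 {k K : Type} [Field k] [Field K] [Algebra k K]
    [FiniteDimensional k K] (S : TotallyRamifiedD k K)
    (π : K) (hπ0 : π ≠ 0) (hπ : S.toCDVF.v π = 1) :
    -- the map sends `𝔪^{-d}` into `O_k`
    (∀ x : K, (x = 0 ∨ -S.depth ≤ S.toCDVF.v x) →
      (Algebra.trace k K x = 0 ∨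
        0 ≤ S.toCDVF.v (algebraMap k K (Algebra.trace k K x)))) ∧
    -- additivity of the induced map
    (∀ x y : K, (x = 0 ∨ -S.depth ≤ S.toCDVF.v x) →
      (y = 0 ∨ -S.depth ≤ S.toCDVF.v y) →
      S.toCDVF.redK (algebraMap k K (Algebra.trace k K (x + y))) =
        S.toCDVF.redK (algebraMap k K (Algebra.trace k K x)) +
          S.toCDVF.redK (algebraMap k K (Algebra.trace k K y))) ∧
    -- `k̄`-linearity of the induced map
    (∀ x u : K, (x = 0 ∨ -S.depth ≤ S.toCDVF.v x) →
      (u = 0 ∨ 0 ≤ S.toCDVF.v u) →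
      S.toCDVF.redK (algebraMap k K (Algebra.trace k K (u * x))) =
        S.toCDVF.redK u * S.toCDVF.redK (algebraMap k K (Algebra.trace k K x))) ∧
    -- `𝔪^{1-d}` is sent to `0`
    (∀ x : K, (x = 0 ∨ 1 - S.depth ≤ S.toCDVF.v x) →
      S.toCDVF.redK (algebraMap k K (Algebra.trace k K x)) = 0) ∧
    -- injectivity on `𝔪^{-d}/𝔪^{1-d}`
    (∀ x : K, (x = 0 ∨ -S.depth ≤ S.toCDVF.v x) →
      S.toCDVF.redK (algebraMap k K (Algebra.trace k K x)) = 0 →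
      (x = 0 ∨ 1 - S.depth ≤ S.toCDVF.v x)) ∧
    -- surjectivity onto `k̄`
    (∀ c : S.toCDVF.Residue, ∃ x : K, (x = 0 ∨ -S.depth ≤ S.toCDVF.v x) ∧
      S.toCDVF.redK (algebraMap k K (Algebra.trace k K x)) = c) ∧
    -- `tr(𝔪^{-d}) = O_k`
    (∀ c : k, (c = 0 ∨ 0 ≤ S.toCDVF.v (algebraMap k K c)) →
      ∃ x : K, (x = 0 ∨ -S.depth ≤ S.toCDVF.v x) ∧ Algebra.trace k K x = c) ∧
    -- `tr(𝔪^{1-d}) = 𝔪₀`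
    (∀ c : k, (c = 0 ∨ (Module.finrank k K : ℤ) ≤ S.toCDVF.v (algebraMap k K c)) →
      ∃ x : K, (x = 0 ∨ 1 - S.depth ≤ S.toCDVF.v x) ∧ Algebra.trace k K x = c) ∧
    -- `c_π = tr(π^{-d})` is a unit of `O_k`
    (Algebra.trace k K (π ^ (-S.depth)) ≠ 0 ∧
      S.toCDVF.v (algebraMap k K (Algebra.trace k K (π ^ (-S.depth)))) = 0) := by
  classical
  obtain ⟨c₀, hc₀0, hc₀v⟩ := S.exists_base_uniformizer
  have hAc₀ : algebraMap k K c₀ ≠ 0 := by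
    simpa using hc₀0
  have hn1 : 1 ≤ (Module.finrank k K : ℤ) := by
    exact_mod_cast Module.finrank_pos (R := k) (M := K)
  have hAinj : ∀ c : k, algebraMap k K c = 0 → c = 0 := fun c hc => by
    simpa using hc
  have htr : ∀ (c : k) (x : K),
      Algebra.trace k K (algebraMap k K c * x) = c * Algebra.trace k K x := by
    intro c x
    rw [← Algebra.smul_def, map_smul, smul_eq_mul]
  have hvA : ∀ {c c' : k}, c ≠ 0 → c' ≠ 0 →
      S.toCDVF.v (algebraMap k K (c * c')) =
        S.toCDVF.v (algebraMap k K c) + S.toCDVF.v (algebraMap k K c') := by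
    intro c c' hc hc'
    rw [map_mul]
    exact S.toCDVF.v_mul (by simpa using hc) (by simpa using hc')
  have hvAinv : ∀ {c : k}, c ≠ 0 →
      S.toCDVF.v (algebraMap k K c⁻¹) = -S.toCDVF.v (algebraMap k K c) := by
    intro c hc
    rw [map_inv₀]
    exact cdvf_v_inv _ (by simpa using hc)
  -- Part 1
  have part1 : ∀ x : K, (x = 0 ∨ -S.depth ≤ S.toCDVF.v x) →
      (Algebra.trace k K x = 0 ∨
        0 ≤ S.toCDVF.v (algebraMap k K (Algebra.trace k K x))) := by
    intro x hx
    have hx' : x = 0 ∨ 1 - S.depth - (Module.finrank k K : ℤ) ≤ S.toCDVF.v x :=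
      hx.imp id (by omega)
    have h := (S.depth_spec x).mpr hx' 1 (Or.inr S.toCDVF.v_one.ge)
    simpa using h
  have memA : ∀ x : K, (x = 0 ∨ -S.depth ≤ S.toCDVF.v x) →
      algebraMap k K (Algebra.trace k K x) ∈ S.toCDVF.O := by
    intro x hx
    rcases part1 x hx with h | h
    · exact Or.inl (by rw [h, map_zero])
    · exact Or.inr h
  -- Part 4
  have part4 : ∀ x : K, (x = 0 ∨ 1 - S.depth ≤ S.toCDVF.v x) →
      S.toCDVF.redK (algebraMap k K (Algebra.trace k K x)) = 0 := by
    intro x hx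
    rcases eq_or_ne x 0 with rfl | hx0
    · rw [map_zero, map_zero]
      exact (cdvf_redK_zero_iff _ (Or.inl rfl)).mpr (Or.inl rfl)
    have hvx := hx.resolve_left hx0
    set x' := algebraMap k K c₀⁻¹ * x with hx'def
    have hx'0 : x' ≠ 0 := mul_ne_zero (by simpa using hc₀0) hx0
    have hvx' : S.toCDVF.v x' = S.toCDVF.v x - (Module.finrank k K : ℤ) := by
      rw [hx'def, S.toCDVF.v_mul (by simpa using hc₀0) hx0, hvAinv hc₀0, hc₀v]
      ring
    have h := (S.depth_spec x').mpr (Or.inr (by omega)) 1 (Or.inr S.toCDVF.v_one.ge)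
    rw [mul_one, hx'def, htr] at h
    rcases eq_or_ne (Algebra.trace k K x) 0 with h0 | h0
    · rw [h0, map_zero]
      exact (cdvf_redK_zero_iff _ (Or.inl rfl)).mpr (Or.inl rfl)
    have h1 : c₀⁻¹ * Algebra.trace k K x ≠ 0 :=
      mul_ne_zero (inv_ne_zero hc₀0) h0
    have h2 := h.resolve_left h1
    rw [hvA (inv_ne_zero hc₀0) h0, hvAinv hc₀0, hc₀v] at h2
    refine (cdvf_redK_zero_iff _ (Or.inr (by omega))).mpr (Or.inr (by omega))
  -- Part 3
  have part3 : ∀ x u : K, (x = 0 ∨ -S.depth ≤ S.toCDVF.v x) →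
      (u = 0 ∨ 0 ≤ S.toCDVF.v u) →
      S.toCDVF.redK (algebraMap k K (Algebra.trace k K (u * x))) =
        S.toCDVF.redK u *
          S.toCDVF.redK (algebraMap k K (Algebra.trace k K x)) := by
    intro x u hx hu
    obtain ⟨y, hy⟩ := S.residue_trivial u hu
    have huO : u ∈ S.toCDVF.O := hu
    have hmO : u - algebraMap k K y ∈ S.toCDVF.O := hy.imp id (by omega)
    have hAy : algebraMap k K y ∈ S.toCDVF.O := by
      have : algebraMap k K y = u - (u - algebraMap k K y) := by ring
      rw [this]; exact sub_mem huO hmO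
    have hmx : (u - algebraMap k K y) * x = 0 ∨
        1 - S.depth ≤ S.toCDVF.v ((u - algebraMap k K y) * x) := by
      rcases eq_or_ne (u - algebraMap k K y) 0 with hm0 | hm0
      · exact Or.inl (by rw [hm0, zero_mul])
      rcases eq_or_ne x 0 with rfl | hx0
      · exact Or.inl (mul_zero _)
      have h1 := hy.resolve_left hm0
      have h2 := hx.resolve_left hx0
      refine Or.inr ?_
      rw [S.toCDVF.v_mul hm0 hx0]
      omega
    have hsplit : u * x = algebraMap k K y * x + (u - algebraMap k K y) * x := by
      ring
    rw [hsplit, map_add, map_add, htr]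
    have hmemmx : algebraMap k K
        (Algebra.trace k K ((u - algebraMap k K y) * x)) ∈ S.toCDVF.O :=
      memA _ (hmx.imp id (by omega))
    have hmemyx : algebraMap k K (y * Algebra.trace k K x) ∈ S.toCDVF.O := by
      rw [map_mul]
      exact mul_mem hAy (memA x hx)
    rw [cdvf_redK_add _ hmemyx hmemmx, part4 _ hmx, add_zero, map_mul,
      cdvf_redK_mul _ hAy (memA x hx)]
    congr 1
    exact (cdvf_redK_congr _ huO hAy hy).symm
  -- Part 5
  have part5 : ∀ x : K, (x = 0 ∨ -S.depth ≤ S.toCDVF.v x) →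
      S.toCDVF.redK (algebraMap k K (Algebra.trace k K x)) = 0 →
      (x = 0 ∨ 1 - S.depth ≤ S.toCDVF.v x) := by
    intro x hx h0
    rcases eq_or_ne x 0 with rfl | hx0
    · exact Or.inl rfl
    by_contra hcon
    have hvx : S.toCDVF.v x ≤ -S.depth := by
      rcases hx with h | h
      · exact absurd h hx0
      · by_contra hh
        exact hcon (Or.inr (by omega))
    set x' := algebraMap k K c₀⁻¹ * x with hx'def
    have hx'0 : x' ≠ 0 := mul_ne_zero (by simpa using hc₀0) hx0
    have hvx' : S.toCDVF.v x' = S.toCDVF.v x - (Module.finrank k K : ℤ) := by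
      rw [hx'def, S.toCDVF.v_mul (by simpa using hc₀0) hx0, hvAinv hc₀0, hc₀v]
      ring
    have hLHS : ∀ y : K, (y = 0 ∨ 0 ≤ S.toCDVF.v y) →
        (Algebra.trace k K (x' * y) = 0 ∨
          0 ≤ S.toCDVF.v (algebraMap k K (Algebra.trace k K (x' * y)))) := by
      intro y hy
      have h3 := part3 x y hx hy
      rw [h0, mul_zero] at h3
      have hyx : y * x = 0 ∨ -S.depth ≤ S.toCDVF.v (y * x) := by
        rcases eq_or_ne y 0 with rfl | hy0
        · exact Or.inl (zero_mul _)
        have h1 := hy.resolve_left hy0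
        have h2 := hx.resolve_left hx0
        refine Or.inr ?_
        rw [S.toCDVF.v_mul hy0 hx0]
        omega
      have h4 := (cdvf_redK_zero_iff _ (memA _ hyx)).mp h3
      have hx'y : x' * y = algebraMap k K c₀⁻¹ * (y * x) := by
        rw [hx'def]; ring
      rw [hx'y, htr]
      rcases eq_or_ne (Algebra.trace k K (y * x)) 0 with ht0 | ht0
      · exact Or.inl (by rw [ht0, mul_zero])
      have h5 : algebraMap k K (Algebra.trace k K (y * x)) ≠ 0 := by
        intro hh; exact ht0 (hAinj _ hh)
      have h7 : 1 ≤ S.toCDVF.v (algebraMap k K (Algebra.trace k K (y * x))) :=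
        h4.resolve_left (fun hh => ht0 (hAinj _ hh))
      have hdvd := S.val_dvd _ ht0
      have h9 : (Module.finrank k K : ℤ) ≤
          S.toCDVF.v (algebraMap k K (Algebra.trace k K (y * x))) :=
        Int.le_of_dvd (by omega) hdvd
      refine Or.inr ?_
      rw [hvA (inv_ne_zero hc₀0) ht0, hvAinv hc₀0, hc₀v]
      omega
    have h8 := (S.depth_spec x').mp hLHS
    rcases h8 with h8 | h8
    · exact hx'0 h8
    · omega
  -- the unit c_π
  have hπd0 : π ^ (-S.depth) ≠ 0 := zpow_ne_zero _ hπ0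
  have hvπd : S.toCDVF.v (π ^ (-S.depth)) = -S.depth := by
    rw [cdvf_v_zpow _ hπ0, hπ, mul_one]
  have hmemπd : π ^ (-S.depth) = 0 ∨ -S.depth ≤ S.toCDVF.v (π ^ (-S.depth)) :=
    Or.inr hvπd.ge
  have hredcπ : S.toCDVF.redK
      (algebraMap k K (Algebra.trace k K (π ^ (-S.depth)))) ≠ 0 := by
    intro h
    rcases part5 _ hmemπd h with h | h
    · exact hπd0 h
    · omega
  have hcπ0 : Algebra.trace k K (π ^ (-S.depth)) ≠ 0 := by
    intro h
    apply hredcπ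
    rw [h, map_zero]
    exact (cdvf_redK_zero_iff _ (Or.inl rfl)).mpr (Or.inl rfl)
  have hcπv0 : S.toCDVF.v
      (algebraMap k K (Algebra.trace k K (π ^ (-S.depth)))) = 0 := by
    have h1 := (part1 _ hmemπd).resolve_left hcπ0
    have h2 : ¬ (1 ≤ S.toCDVF.v
        (algebraMap k K (Algebra.trace k K (π ^ (-S.depth))))) := by
      intro h
      exact hredcπ ((cdvf_redK_zero_iff _ (Or.inr (by omega))).mpr (Or.inr h))
    omega
  set t := Algebra.trace k K (π ^ (-S.depth)) with htdef
  -- common construction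
  have hxgen : ∀ y : k, Algebra.trace k K
      (algebraMap k K (y / t) * π ^ (-S.depth)) = y := by
    intro y
    rw [htr, ← htdef, div_mul_cancel₀ _ hcπ0]
  have hvgen : ∀ y : k, y ≠ 0 →
      S.toCDVF.v (algebraMap k K (y / t) * π ^ (-S.depth)) =
        S.toCDVF.v (algebraMap k K y) - S.depth := by
    intro y hy0
    have hyd : y / t ≠ 0 := div_ne_zero hy0 hcπ0
    rw [S.toCDVF.v_mul (by simpa using hyd) hπd0, hvπd, div_eq_mul_inv,
      hvA hy0 (inv_ne_zero hcπ0), hvAinv hcπ0, hcπv0]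
    ring
  refine ⟨part1, ?_, part3, part4, part5, ?_, ?_, ?_, hcπ0, hcπv0⟩
  -- additivity
  · intro x y hx hy
    rw [map_add, map_add]
    exact cdvf_redK_add _ (memA x hx) (memA y hy)
  -- surjectivity
  · intro c
    obtain ⟨⟨a, haO⟩, rfl⟩ := Ideal.Quotient.mk_surjective c
    obtain ⟨y, hy⟩ := S.residue_trivial a haO
    have hAy : algebraMap k K y ∈ S.toCDVF.O := by
      have h : algebraMap k K y = a - (a - algebraMap k K y) := by ring
      rw [h]
      exact sub_mem haO (hy.imp id (by omega))
    refine ⟨algebraMap k K (y / t) * π ^ (-S.depth), ?_, ?_⟩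
    · rcases eq_or_ne y 0 with rfl | hy0
      · refine Or.inl ?_
        rw [zero_div, map_zero, zero_mul]
      · refine Or.inr ?_
        rw [hvgen y hy0]
        have : 0 ≤ S.toCDVF.v (algebraMap k K y) :=
          hAy.resolve_left (by simpa using hy0)
        omega
    · rw [hxgen]
      have h1 : S.toCDVF.redK a = Ideal.Quotient.mk S.toCDVF.mIdeal ⟨a, haO⟩ :=
        cdvf_redK_mk _ haO
      rw [← h1]
      refine (cdvf_redK_congr _ haO hAy hy).symm
  -- tr(𝔪^{-d}) = O_k
  · intro c hc
    rcases eq_or_ne c 0 with rfl | hc0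
    · exact ⟨0, Or.inl rfl, map_zero _⟩
    refine ⟨algebraMap k K (c / t) * π ^ (-S.depth), ?_, hxgen c⟩
    refine Or.inr ?_
    rw [hvgen c hc0]
    have := hc.resolve_left hc0
    omega
  -- tr(𝔪^{1-d}) = 𝔪₀
  · intro c hc
    rcases eq_or_ne c 0 with rfl | hc0
    · exact ⟨0, Or.inl rfl, map_zero _⟩
    refine ⟨algebraMap k K (c / t) * π ^ (-S.depth), ?_, hxgen c⟩
    refine Or.inr ?_
    rw [hvgen c hc0]
    have := hc.resolve_left hc0
    omega
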